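/- For every θ ∈ (0, π/2), ∫_0^∞ Φ̄(y·cos θ) · Φ̄(y·sin θ) dy = (1/(2√(2π))) · ((1 − cos θ)/sin θ + (1 − sin θ)/cos θ). -/

import Mathlib

open MeasureTheory Filter Real

noncomputable section

/-- Complementary CDF of the standard normal distribution. -/
def PhiBar (x : ℝ) : ℝ :=
  ∫ u in Set.Ioi x, (Real.sqrt (2 * Real.pi))⁻¹ * Real.exp (-(u ^ 2) / 2)

namespace PhiBarAux

/-- standard normal density -/
def phi (u : ℝ) : ℝ := (Real.sqrt (2 * Real.pi))⁻¹ * Real.exp (-(u ^ 2) / 2)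

lemma phiBar_eq_int (x : ℝ) : PhiBar x = ∫ u in Set.Ioi x, phi u := rfl

lemma phi_cont : Continuous phi := by
  unfold phi; fun_prop

lemma phi_nonneg (u : ℝ) : 0 ≤ phi u := by
  unfold phi; positivity

lemma phi_pos (u : ℝ) : 0 < phi u := by
  unfold phi
  have h : (0:ℝ) < Real.sqrt (2 * Real.pi) := Real.sqrt_pos.2 (by positivity)
  positivity

lemma exp_eq (u : ℝ) : Real.exp (-(u ^ 2) / 2) = Real.exp (-(1/2 : ℝ) * u ^ 2) := by
  ring_nf

lemma integrable_phi : Integrable phi := by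
  have h := (integrable_exp_neg_mul_sq (by norm_num : (0:ℝ) < 1/2)).const_mul
      ((Real.sqrt (2 * Real.pi))⁻¹)
  refine h.congr ?_
  filter_upwards with u
  rw [phi, exp_eq]

lemma integral_phi : ∫ u, phi u = 1 := by
  unfold phi
  simp_rw [exp_eq]
  rw [integral_const_mul, integral_gaussian]
  have : Real.pi / (1/2 : ℝ) = 2 * Real.pi := by ring
  rw [this, inv_mul_cancel₀]
  exact ne_of_gt (Real.sqrt_pos.2 (by positivity))

lemma phiBar_zero : PhiBar 0 = 1 / 2 := by
  rw [phiBar_eq_int]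
  unfold phi
  simp_rw [exp_eq]
  rw [integral_const_mul, integral_gaussian_Ioi]
  have : Real.pi / (1/2 : ℝ) = 2 * Real.pi := by ring
  rw [this]
  rw [inv_mul_eq_div, div_div]
  rw [div_eq_div_iff (by positivity) (by norm_num)]
  ring

lemma phiBar_nonneg (x : ℝ) : 0 ≤ PhiBar x := by
  rw [phiBar_eq_int]
  exact setIntegral_nonneg measurableSet_Ioi fun u _ => phi_nonneg u

lemma phiBar_le_one (x : ℝ) : PhiBar x ≤ 1 := by
  rw [phiBar_eq_int, ← integral_phi]
  exact setIntegral_le_integral integrable_phi (Filter.Eventually.of_forall phi_nonneg)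

lemma phiBar_sub (x : ℝ) : PhiBar x = PhiBar 0 - ∫ u in (0:ℝ)..x, phi u := by
  have h1 : (∫ u in Set.Iic x, phi u) + (∫ u in Set.Ioi x, phi u) = ∫ u, phi u :=
    intervalIntegral.integral_Iic_add_Ioi integrable_phi.integrableOn integrable_phi.integrableOn
  have h2 : (∫ u in Set.Iic (0:ℝ), phi u) + (∫ u in Set.Ioi (0:ℝ), phi u) = ∫ u, phi u :=
    intervalIntegral.integral_Iic_add_Ioi integrable_phi.integrableOn integrable_phi.integrableOn
  have h3 : ((∫ u in Set.Iic x, phi u) - ∫ u in Set.Iic (0:ℝ), phi u) = ∫ u in (0:ℝ)..x, phi u :=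
    intervalIntegral.integral_Iic_sub_Iic integrable_phi.integrableOn integrable_phi.integrableOn
  rw [phiBar_eq_int, phiBar_eq_int]
  linarith

lemma hasDerivAt_phiBar (x : ℝ) : HasDerivAt PhiBar (-(phi x)) x := by
  have h : HasDerivAt (fun y => ∫ u in (0:ℝ)..y, phi u) (phi x) x :=
    intervalIntegral.integral_hasDerivAt_right (phi_cont.intervalIntegrable _ _)
      (phi_cont.stronglyMeasurableAtFilter _ _) phi_cont.continuousAt
  have h2 : HasDerivAt (fun y => PhiBar 0 - ∫ u in (0:ℝ)..y, phi u) (-(phi x)) x := by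
    exact ((hasDerivAt_const x (PhiBar 0)).sub h).congr_deriv (zero_sub _)
  exact h2.congr_of_eventuallyEq (Filter.Eventually.of_forall fun y => phiBar_sub y)

lemma hasDerivAt_phi (x : ℝ) : HasDerivAt phi (-(x * phi x)) x := by
  have h1 : HasDerivAt (fun u : ℝ => -(u ^ 2) / 2) (-x) x := by
    have := ((hasDerivAt_pow 2 x).neg).div_const 2
    simpa using this.congr_deriv (by push_cast; ring)
  have h2 := (h1.exp).const_mul ((Real.sqrt (2 * Real.pi))⁻¹)
  unfold phi
  exact h2.congr_deriv (by ring)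

lemma tendsto_phi_atTop : Tendsto phi atTop (nhds 0) := by
  have h1 : Tendsto (fun u : ℝ => -(u ^ 2) / 2) atTop atBot := by
    apply Filter.Tendsto.atBot_div_const (by norm_num)
    exact tendsto_neg_atBot_iff.2 (tendsto_pow_atTop (by norm_num))
  have h2 : Tendsto (fun u : ℝ => (Real.sqrt (2 * Real.pi))⁻¹ * Real.exp (-(u ^ 2) / 2)) atTop
      (nhds ((Real.sqrt (2 * Real.pi))⁻¹ * 0)) :=
    (Real.tendsto_exp_atBot.comp h1).const_mul _
  rw [mul_zero] at h2
  exact h2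

/-- the integral of u φ(u) over (x, ∞) is φ(x), plus integrability -/
lemma hasDeriv_negphi (u : ℝ) : HasDerivAt (fun t => -(phi t)) (u * phi u) u := by
  exact (hasDerivAt_phi u).neg.congr_deriv (neg_neg _)

lemma tendsto_negphi : Tendsto (fun t => -(phi t)) atTop (nhds 0) := by
  simpa using tendsto_phi_atTop.neg

lemma integrableOn_id_mul_phi {x : ℝ} (hx : 0 ≤ x) :
    IntegrableOn (fun u => u * phi u) (Set.Ioi x) := by
  exact integrableOn_Ioi_deriv_of_nonneg' (fun u _ => hasDeriv_negphi u)
    (fun u hu => mul_nonneg (le_of_lt (lt_of_le_of_lt hx hu)) (phi_nonneg u)) tendsto_negphi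

lemma integral_id_mul_phi {x : ℝ} (hx : 0 ≤ x) :
    ∫ u in Set.Ioi x, u * phi u = phi x := by
  have := integral_Ioi_of_hasDerivAt_of_nonneg' (g := fun t => -(phi t))
    (g' := fun u => u * phi u) (a := x) (fun u _ => hasDeriv_negphi u)
    (fun u hu => mul_nonneg (le_of_lt (lt_of_le_of_lt hx hu)) (phi_nonneg u)) tendsto_negphi
  simpa using this

lemma mul_phiBar_le {x : ℝ} (hx : 0 < x) : x * PhiBar x ≤ phi x := by
  rw [phiBar_eq_int, ← integral_const_mul, ← integral_id_mul_phi hx.le]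
  apply setIntegral_mono_on ((integrable_phi.const_mul x).integrableOn)
    (integrableOn_id_mul_phi hx.le) measurableSet_Ioi
  intro u hu
  exact mul_le_mul_of_nonneg_right (le_of_lt hu) (phi_nonneg u)

lemma tendsto_phiBar_atTop : Tendsto PhiBar atTop (nhds 0) := by
  apply tendsto_of_tendsto_of_tendsto_of_le_of_le' tendsto_const_nhds tendsto_phi_atTop
  · exact Filter.Eventually.of_forall fun x => phiBar_nonneg x
  · filter_upwards [Filter.eventually_ge_atTop (1:ℝ)] with x hx
    calc PhiBar x ≤ x * PhiBar x := le_mul_of_one_le_left (phiBar_nonneg x) hx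
    _ ≤ phi x := mul_phiBar_le (by linarith)

end PhiBarAux

open PhiBarAux in
/-- a closed form for ∫₀^∞ Φ̄(y cos θ) Φ̄(y sin θ) dy. -/
theorem integral_PhiBar_product (θ : ℝ) (hθ : θ ∈ Set.Ioo (0 : ℝ) (Real.pi / 2)) :
    ∫ y in Set.Ioi (0 : ℝ), PhiBar (y * Real.cos θ) * PhiBar (y * Real.sin θ)
      = (1 / (2 * Real.sqrt (2 * Real.pi))) *
          ((1 - Real.cos θ) / Real.sin θ + (1 - Real.sin θ) / Real.cos θ) := by
  obtain ⟨hθ0, hθ1⟩ := hθ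
  set a := Real.cos θ with ha
  set b := Real.sin θ with hb
  have ha0 : 0 < a := Real.cos_pos_of_mem_Ioo ⟨by linarith [Real.pi_pos], hθ1⟩
  have hb0 : 0 < b := Real.sin_pos_of_pos_of_lt_pi hθ0 (by linarith [Real.pi_pos])
  have hab : a ^ 2 + b ^ 2 = 1 := by rw [ha, hb]; exact Real.cos_sq_add_sin_sq θ
  have hs : Real.sqrt (2 * Real.pi) ≠ 0 := ne_of_gt (Real.sqrt_pos.2 (by positivity))
  -- key density identity
  have key : ∀ y : ℝ, phi y = Real.sqrt (2 * Real.pi) * (phi (y * a) * phi (y * b)) := by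
    intro y
    have hexp : Real.exp (-((y*a) ^ 2) / 2) * Real.exp (-((y*b) ^ 2) / 2)
        = Real.exp (-(y ^ 2) / 2) := by
      rw [← Real.exp_add]; congr 1; nlinarith [hab]
    unfold PhiBarAux.phi
    rw [← hexp]
    field_simp
  -- the antiderivative
  set g : ℝ → ℝ := fun y => y * PhiBar (y * a) * PhiBar (y * b)
      - (1/a) * phi (y * a) * PhiBar (y * b)
      - (1/b) * phi (y * b) * PhiBar (y * a)
      + ((b/a + a/b) * (Real.sqrt (2 * Real.pi))⁻¹) * PhiBar y with hg
  have hderiv : ∀ y : ℝ, HasDerivAt g (PhiBar (y * a) * PhiBar (y * b)) y := by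
    intro y
    have hPa : HasDerivAt (fun y : ℝ => PhiBar (y * a)) (-(phi (y * a)) * a) y :=
      by have := (hasDerivAt_phiBar (y * a)).comp y (hasDerivAt_mul_const (x := y) a); exact this
    have hPb : HasDerivAt (fun y : ℝ => PhiBar (y * b)) (-(phi (y * b)) * b) y :=
      by have := (hasDerivAt_phiBar (y * b)).comp y (hasDerivAt_mul_const (x := y) b); exact this
    have hqa : HasDerivAt (fun y : ℝ => phi (y * a)) (-((y * a) * phi (y * a)) * a) y :=
      by have := (hasDerivAt_phi (y * a)).comp y (hasDerivAt_mul_const (x := y) a); exact this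
    have hqb : HasDerivAt (fun y : ℝ => phi (y * b)) (-((y * b) * phi (y * b)) * b) y :=
      by have := (hasDerivAt_phi (y * b)).comp y (hasDerivAt_mul_const (x := y) b); exact this
    have H := ((((((hasDerivAt_id y).mul hPa).mul hPb).sub
        ((hqa.mul hPb).const_mul (1/a))).sub
        ((hqb.mul hPa).const_mul (1/b))).add
        ((hasDerivAt_phiBar y).const_mul ((b/a + a/b) * (Real.sqrt (2 * Real.pi))⁻¹)))
    have H2 : HasDerivAt g
        ((1 * PhiBar (y * a) + id y * (-phi (y * a) * a)) * PhiBar (y * b)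
          + id y * PhiBar (y * a) * (-phi (y * b) * b)
          - 1 / a * (-(y * a * phi (y * a)) * a * PhiBar (y * b)
              + phi (y * a) * (-phi (y * b) * b))
          - 1 / b * (-(y * b * phi (y * b)) * b * PhiBar (y * a)
              + phi (y * b) * (-phi (y * a) * a))
          + (b / a + a / b) * (Real.sqrt (2 * Real.pi))⁻¹ * -phi y) y :=
      H.congr_of_eventuallyEq (Filter.Eventually.of_forall fun x => by
        simp only [hg, id_eq, Pi.mul_apply, Pi.sub_apply, Pi.add_apply]; ring)
    have hE : (1 * PhiBar (y * a) + id y * (-phi (y * a) * a)) * PhiBar (y * b)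
          + id y * PhiBar (y * a) * (-phi (y * b) * b)
          - 1 / a * (-(y * a * phi (y * a)) * a * PhiBar (y * b)
              + phi (y * a) * (-phi (y * b) * b))
          - 1 / b * (-(y * b * phi (y * b)) * b * PhiBar (y * a)
              + phi (y * b) * (-phi (y * a) * a))
          + (b / a + a / b) * (Real.sqrt (2 * Real.pi))⁻¹ * -phi y
        = PhiBar (y * a) * PhiBar (y * b) := by
      rw [key y]
      simp only [id_eq]
      field_simp
      ring
    exact hE ▸ H2
  have hpos : ∀ y ∈ Set.Ioi (0:ℝ), 0 ≤ PhiBar (y * a) * PhiBar (y * b) :=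
    fun y _ => mul_nonneg (phiBar_nonneg _) (phiBar_nonneg _)
  -- limits
  have hta : Tendsto (fun y : ℝ => y * a) atTop atTop := tendsto_id.atTop_mul_const ha0
  have htb : Tendsto (fun y : ℝ => y * b) atTop atTop := tendsto_id.atTop_mul_const hb0
  have hphia : Tendsto (fun y : ℝ => phi (y * a)) atTop (nhds 0) := tendsto_phi_atTop.comp hta
  have hphib : Tendsto (fun y : ℝ => phi (y * b)) atTop (nhds 0) := tendsto_phi_atTop.comp htb
  have hPa' : Tendsto (fun y : ℝ => PhiBar (y * a)) atTop (nhds 0) :=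
    tendsto_phiBar_atTop.comp hta
  have hPb' : Tendsto (fun y : ℝ => PhiBar (y * b)) atTop (nhds 0) :=
    tendsto_phiBar_atTop.comp htb
  have T1 : Tendsto (fun y : ℝ => y * PhiBar (y * a) * PhiBar (y * b)) atTop (nhds 0) := by
    have hbound : Tendsto (fun y : ℝ => (1/a) * phi (y * a)) atTop (nhds 0) := by
      have := hphia.const_mul (1/a); simpa using this
    apply tendsto_of_tendsto_of_tendsto_of_le_of_le' tendsto_const_nhds hbound
    · filter_upwards [Filter.eventually_ge_atTop (0:ℝ)] with y hy
      exact mul_nonneg (mul_nonneg hy (phiBar_nonneg _)) (phiBar_nonneg _)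
    · filter_upwards [Filter.eventually_gt_atTop (0:ℝ)] with y hy
      have h1 : y * PhiBar (y * a) ≤ (1/a) * phi (y * a) := by
        rw [div_mul_eq_mul_div, le_div_iff₀ ha0, one_mul]
        calc y * PhiBar (y * a) * a = y * a * PhiBar (y * a) := by ring
        _ ≤ phi (y * a) := mul_phiBar_le (mul_pos hy ha0)
      calc y * PhiBar (y * a) * PhiBar (y * b) ≤ y * PhiBar (y * a) * 1 :=
            mul_le_mul_of_nonneg_left (phiBar_le_one _)
              (mul_nonneg hy.le (phiBar_nonneg _))
      _ = y * PhiBar (y * a) := by ring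
      _ ≤ (1/a) * phi (y * a) := h1
  have T2 : Tendsto (fun y : ℝ => (1/a) * phi (y * a) * PhiBar (y * b)) atTop (nhds 0) := by
    have := (hphia.const_mul (1/a)).mul hPb'; simpa using this
  have T3 : Tendsto (fun y : ℝ => (1/b) * phi (y * b) * PhiBar (y * a)) atTop (nhds 0) := by
    have := (hphib.const_mul (1/b)).mul hPa'; simpa using this
  have T4 : Tendsto (fun y : ℝ => ((b/a + a/b) * (Real.sqrt (2 * Real.pi))⁻¹) * PhiBar y) atTop (nhds 0) := by
    have := tendsto_phiBar_atTop.const_mul ((b/a + a/b) * (Real.sqrt (2 * Real.pi))⁻¹); simpa using this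
  have hlim : Tendsto g atTop (nhds 0) := by
    have := ((T1.sub T2).sub T3).add T4
    simpa [hg] using this
  have hint := integral_Ioi_of_hasDerivAt_of_nonneg' (g := g)
    (g' := fun y => PhiBar (y * a) * PhiBar (y * b)) (a := 0)
    (fun y _ => hderiv y) hpos hlim
  rw [hint, hg]
  have hphi0 : phi 0 = (Real.sqrt (2 * Real.pi))⁻¹ := by
    unfold PhiBarAux.phi; norm_num
  simp only [zero_mul, mul_zero]
  rw [phiBar_zero, hphi0]
  field_simp
  ring
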